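/- arXiv:2306.14719 — 4 statements merged into one kernel-verified Lean document; each statement's English description precedes it below -/
import Mathlib

section
/- For all 0 ≤ i ≤ p−2 one has d(i) = D(n_1, …, n_{p−i−1}, n_{p−i} − 1) and r(i) = D(n_2, …, n_{p−i−1}, n_{p−i} − 1), and for i = p−1 one has d(p−1) = n_1 − 1 and r(p−1) = 1; moreover d(i) > 0 and r(i) > 0 for all 0 ≤ i ≤ p−1. -/
/-- Determinant of the `m × m` tridiagonal matrix with diagonal entries
`a 1, …, a m`, entries `-1` on the sub- and superdiagonal, and `0` elsewhere.
For `m = 0` (the empty sequence) this is `1`. -/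
def tridiagDet (m : ℕ) (a : ℕ → ℤ) : ℤ :=
  Matrix.det (Matrix.of fun i j : Fin m =>
    if (i : ℕ) = (j : ℕ) then a ((i : ℕ) + 1)
    else if (i : ℕ) + 1 = (j : ℕ) ∨ (j : ℕ) + 1 = (i : ℕ) then -1 else 0)

/-- `nn n p i = D(n 1, …, n (p - i))`: the numerator of the `(p-i)`-th convergent
(equal to `1` for `i = p`, matching the convention `n(p) = 1`). -/
def nn (n : ℕ → ℤ) (p i : ℕ) : ℤ := tridiagDet (p - i) n

/-- `kk n p i = D(n 2, …, n (p - i))` for `i < p`, and `kk n p p = 0`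
(the convention `k(p) = 0`). -/
def kk (n : ℕ → ℤ) (p i : ℕ) : ℤ :=
  if i = p then 0 else tridiagDet (p - i - 1) (fun j => n (j + 1))

/-- `dd n p i = n(i) - n(i+1)`, the degree of the stable kernel bundle `S_i`. -/
def dd (n : ℕ → ℤ) (p i : ℕ) : ℤ := nn n p i - nn n p (i + 1)

/-- `rr n p i = k(i) - k(i+1)`, the rank of the stable kernel bundle `S_i`. -/
def rr (n : ℕ → ℤ) (p i : ℕ) : ℤ := kk n p i - kk n p (i + 1)

lemma val_succAbove' {n : ℕ} (p : Fin (n+1)) (i : Fin n) :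
    (p.succAbove i : ℕ) = if (i : ℕ) < (p : ℕ) then (i : ℕ) else (i : ℕ) + 1 := by
  rw [Fin.succAbove]
  rcases lt_or_ge ((i : ℕ)) ((p : ℕ)) with h | h
  · rw [if_pos, if_pos h]; · simp
    · exact Fin.lt_def.mpr (by simpa using h)
  · rw [if_neg, if_neg (not_lt.mpr h)]; · simp
    · exact fun hc => absurd (Fin.lt_def.mp hc) (by simpa using not_lt.mpr h)

lemma tridiagDet_zero (a : ℕ → ℤ) : tridiagDet 0 a = 1 := by
  simp [tridiagDet]

lemma tridiagDet_one (a : ℕ → ℤ) : tridiagDet 1 a = a 1 := by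
  simp [tridiagDet, Matrix.det_fin_one]

lemma tridiagDet_succ_succ (m : ℕ) (a : ℕ → ℤ) :
    tridiagDet (m+2) a = a (m+2) * tridiagDet (m+1) a - tridiagDet m a := by
  set A : Matrix (Fin (m+2)) (Fin (m+2)) ℤ := Matrix.of fun i j : Fin (m+2) =>
    if (i : ℕ) = (j : ℕ) then a ((i : ℕ) + 1)
    else if (i : ℕ) + 1 = (j : ℕ) ∨ (j : ℕ) + 1 = (i : ℕ) then -1 else 0 with hA
  have hexp := Matrix.det_succ_row A (Fin.last (m+1))
  rw [show tridiagDet (m+2) a = A.det from rfl, hexp]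
  rw [Fin.sum_univ_castSucc, Fin.sum_univ_castSucc]
  have hzero : ∀ j : Fin m,
      (-1 : ℤ) ^ ((Fin.last (m+1) : ℕ) + ((j.castSucc.castSucc : Fin (m+2)) : ℕ)) *
        A (Fin.last (m+1)) j.castSucc.castSucc *
        (A.submatrix (Fin.last (m+1)).succAbove j.castSucc.castSucc.succAbove).det = 0 := by
    intro j
    have hj : ((j.castSucc.castSucc : Fin (m+2)) : ℕ) = (j : ℕ) := by simp
    have hjm : (j : ℕ) < m := j.isLt
    have : A (Fin.last (m+1)) j.castSucc.castSucc = 0 := by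
      simp only [hA, Matrix.of_apply, Fin.val_last, hj]
      rw [if_neg (by omega), if_neg (by omega)]
    rw [this]; ring
  rw [Finset.sum_eq_zero (fun j _ => hzero j), zero_add]
  have hlast : A (Fin.last (m+1)) (Fin.last (m+1)) = a (m+2) := by
    simp [hA]
  have hminor_last :
      (A.submatrix (Fin.last (m+1)).succAbove (Fin.last (m+1)).succAbove).det
        = tridiagDet (m+1) a := by
    rw [tridiagDet]
    congr 1
    ext i j
    simp only [Matrix.submatrix_apply, Fin.succAbove_last, hA, Matrix.of_apply,
      Fin.coe_castSucc]
  have hco : A (Fin.last (m+1)) ((Fin.last m).castSucc) = -1 := by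
    simp only [hA, Matrix.of_apply, Fin.val_last, Fin.coe_castSucc]
    rw [if_neg (by omega)]; simp
  set B := A.submatrix (Fin.last (m+1)).succAbove ((Fin.last m).castSucc).succAbove with hB
  have hBdet : B.det = - tridiagDet m a := by
    have hexp2 := Matrix.det_succ_column B (Fin.last m)
    rw [hexp2, Fin.sum_univ_castSucc]
    have hz2 : ∀ i : Fin m,
        (-1 : ℤ) ^ (((i.castSucc : Fin (m+1)) : ℕ) + ((Fin.last m : Fin (m+1)) : ℕ)) *
          B i.castSucc (Fin.last m) *
          (B.submatrix i.castSucc.succAbove (Fin.last m).succAbove).det = 0 := by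
      intro i
      have h1 : B i.castSucc (Fin.last m) = 0 := by
        simp only [hB, Matrix.submatrix_apply, Fin.succAbove_last, hA, Matrix.of_apply]
        have hv : ((((Fin.last m).castSucc).succAbove (Fin.last m) : Fin (m+2)) : ℕ) = m + 1 := by
          rw [val_succAbove']; simp
        have hv2 : ((i.castSucc.castSucc : Fin (m+2)) : ℕ) = (i : ℕ) := by simp
        rw [hv2, hv, if_neg (by omega), if_neg (by omega)]
      rw [h1]; ring
    rw [Finset.sum_eq_zero (fun i _ => hz2 i), zero_add]
    have hBe : B (Fin.last m) (Fin.last m) = -1 := by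
      simp only [hB, Matrix.submatrix_apply, Fin.succAbove_last, hA, Matrix.of_apply]
      have hv : ((((Fin.last m).castSucc).succAbove (Fin.last m) : Fin (m+2)) : ℕ) = m + 1 := by
        rw [val_succAbove']; simp
      have hv2 : (((Fin.last m).castSucc : Fin (m+2)) : ℕ) = m := by simp
      rw [hv2, hv, if_neg (by omega), if_pos (by omega)]
    have hminor2 :
        (B.submatrix (Fin.last m).succAbove (Fin.last m).succAbove).det = tridiagDet m a := by
      rw [tridiagDet]
      congr 1
      ext i j
      simp only [Matrix.submatrix_apply, Fin.succAbove_last, hB, hA, Matrix.of_apply]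
      have hvi : ((i.castSucc.castSucc : Fin (m+2)) : ℕ) = (i : ℕ) := by simp
      have hvj : ((((Fin.last m).castSucc).succAbove j.castSucc : Fin (m+2)) : ℕ) = (j : ℕ) := by
        rw [val_succAbove']
        simp only [Fin.coe_castSucc, Fin.val_last]
        rw [if_pos j.isLt]
      rw [hvi, hvj]
    rw [hBe, hminor2]
    simp only [Fin.coe_castSucc, Fin.val_last]
    have hpow : (-1 : ℤ) ^ (m + m) = 1 := by
      rw [show m + m = 2 * m by ring, pow_mul]; norm_num
    rw [hpow]; ring
  rw [hlast, hminor_last, hco, hBdet]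
  simp only [Fin.val_last, Fin.coe_castSucc]
  have h1 : (-1 : ℤ) ^ (m + 1 + (m + 1)) = 1 := by
    rw [show m+1+(m+1) = 2*(m+1) by ring, pow_mul]; norm_num
  have h2 : (-1 : ℤ) ^ (m + 1 + m) = -1 := by
    rw [show m + 1 + m = 2*m+1 by ring, pow_succ, pow_mul]; norm_num
  rw [h1, h2]
  ring

lemma tridiagDet_congr (m : ℕ) {a b : ℕ → ℤ} (h : ∀ j, 1 ≤ j → j ≤ m → a j = b j) :
    tridiagDet m a = tridiagDet m b := by
  unfold tridiagDet
  congr 1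
  ext i j
  simp only [Matrix.of_apply]
  split_ifs with h1
  · exact h ((i : ℕ) + 1) (by omega) (by have := i.isLt; omega)
  · rfl
  · rfl

lemma tridiagDet_update (m : ℕ) (a : ℕ → ℤ) :
    tridiagDet (m+1) (Function.update a (m+1) (a (m+1) - 1))
      = tridiagDet (m+1) a - tridiagDet m a := by
  induction m with
  | zero =>
    rw [tridiagDet_one, tridiagDet_one, tridiagDet_zero, Function.update_self]
  | succ m _ =>
    rw [tridiagDet_succ_succ, tridiagDet_succ_succ m a, Function.update_self]
    have h1 : tridiagDet (m+1) (Function.update a (m+2) (a (m+2) - 1)) = tridiagDet (m+1) a :=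
      tridiagDet_congr _ (fun j _ h2 => Function.update_of_ne (by omega) _ _)
    have h2 : tridiagDet m (Function.update a (m+2) (a (m+2) - 1)) = tridiagDet m a :=
      tridiagDet_congr _ (fun j _ h2 => Function.update_of_ne (by omega) _ _)
    rw [h1, h2]; ring

lemma tridiagDet_pos_lt (m : ℕ) (a : ℕ → ℤ) (h : ∀ j, 1 ≤ j → j ≤ m + 1 → 2 ≤ a j) :
    1 ≤ tridiagDet m a ∧ tridiagDet m a < tridiagDet (m+1) a := by
  induction m with
  | zero =>
    rw [tridiagDet_zero, tridiagDet_one]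
    exact ⟨le_refl 1, by have := h 1 (by omega) (by omega); omega⟩
  | succ m ih =>
    have ih' := ih (fun j hj1 hj2 => h j hj1 (by omega))
    rw [tridiagDet_succ_succ]
    have ha := h (m+2) (by omega) (by omega)
    refine ⟨by omega, ?_⟩
    nlinarith [ih'.1, ih'.2]

/-- Determinantal formulas for `d(i) = n(i) - n(i+1)` and `r(i) = k(i) - k(i+1)`:
for `0 ≤ i ≤ p-2`, `d(i) = D(n_1, ..., n_(p-i-1), n_(p-i) - 1)` and
`r(i) = D(n_2, ..., n_(p-i-1), n_(p-i) - 1)`; and `d(p-1) = n_1 - 1`, `r(p-1) = 1`.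
Moreover `d(i) > 0` and `r(i) > 0` for all `0 ≤ i ≤ p-1`. -/
theorem dd_rr_det_formula
    (p : ℕ) (hp : 1 ≤ p) (n : ℕ → ℤ) (hn : ∀ i, 1 ≤ i → i ≤ p → 2 ≤ n i) :
    (∀ i, i + 2 ≤ p →
      dd n p i = tridiagDet (p - i) (Function.update n (p - i) (n (p - i) - 1)) ∧
      rr n p i = tridiagDet (p - i - 1)
        (Function.update (fun j => n (j + 1)) (p - i - 1) (n (p - i) - 1))) ∧
    dd n p (p - 1) = n 1 - 1 ∧ rr n p (p - 1) = 1 ∧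
    (∀ i ≤ p - 1, 0 < dd n p i ∧ 0 < rr n p i) := by
  have hddlast : dd n p (p - 1) = n 1 - 1 := by
    unfold dd nn
    rw [show p - (p - 1) = 1 by omega, show p - (p - 1 + 1) = 0 by omega,
      tridiagDet_one, tridiagDet_zero]
  have hrrlast : rr n p (p - 1) = 1 := by
    unfold rr kk
    rw [if_neg (by omega), if_pos (by omega), show p - (p - 1) - 1 = 0 by omega,
      tridiagDet_zero]
    ring
  have hkey : ∀ i, i + 2 ≤ p →
      dd n p i = tridiagDet (p - i) (Function.update n (p - i) (n (p - i) - 1)) ∧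
      rr n p i = tridiagDet (p - i - 1)
        (Function.update (fun j => n (j + 1)) (p - i - 1) (n (p - i) - 1)) := by
    intro i hi
    obtain ⟨m, hm⟩ : ∃ m, p - i = m + 2 := ⟨p - i - 2, by omega⟩
    constructor
    · unfold dd nn
      rw [hm, show p - (i + 1) = m + 1 by omega]
      exact (tridiagDet_update (m+1) n).symm
    · unfold rr kk
      rw [if_neg (by omega), if_neg (by omega), hm,
        show m + 2 - 1 = m + 1 by omega, show p - (i + 1) - 1 = m by omega]
      exact (tridiagDet_update m (fun j => n (j + 1))).symm
  refine ⟨hkey, hddlast, hrrlast, ?_⟩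
  intro i hi
  constructor
  · obtain ⟨m, hm⟩ : ∃ m, p - i = m + 1 := ⟨p - i - 1, by omega⟩
    have := (tridiagDet_pos_lt m n (fun j hj1 hj2 => hn j hj1 (by omega))).2
    unfold dd nn
    rw [hm, show p - (i + 1) = m by omega]
    omega
  · rcases Nat.lt_or_ge (i + 2) (p + 1) with h | h
    · obtain ⟨m, hm⟩ : ∃ m, p - i = m + 2 := ⟨p - i - 2, by omega⟩
      have := (tridiagDet_pos_lt m (fun j => n (j + 1))
        (fun j hj1 hj2 => hn (j+1) (by omega) (by omega))).2
      unfold rr kk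
      rw [if_neg (by omega), if_neg (by omega), hm,
        show m + 2 - 1 = m + 1 by omega, show p - (i + 1) - 1 = m by omega]
      omega
    · have hip : i = p - 1 := by omega
      rw [hip, hrrlast]
      omega
end

section
/- Define the slopes s(i) := d(i)/r(i) ∈ ℚ for 0 ≤ i ≤ p−1 and set s(p) := 1. Then n(0)/k(0) > s(0) ≥ s(1) ≥ ⋯ ≥ s(p−1) ≥ s(p) = 1, and for each 1 ≤ i ≤ p the equality s(i−1) = s(i) holds if and only if n_{p−i+1} = 2. -/
open Matrix

section Tridiagonal

variable {R : Type*} [CommRing R]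

def tridiag (m : ℕ) (a : ℕ → R) : Matrix (Fin m) (Fin m) R :=
  Matrix.of fun i j : Fin m =>
    if (i : ℕ) = (j : ℕ) then a ((i : ℕ) + 1)
    else if (i : ℕ) + 1 = (j : ℕ) ∨ (j : ℕ) + 1 = (i : ℕ) then -1 else 0

variable (a : ℕ → R) {m : ℕ}

theorem tridiag_apply_self (i : Fin m) : tridiag m a i i = a (i + 1) := by
  simp [tridiag]

theorem tridiag_apply_of_succ_eq {i j : Fin m} (h : (i : ℕ) + 1 = j) : tridiag m a i j = -1 := by
  simp only [tridiag, of_apply]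
  rw [if_neg (by omega), if_pos (Or.inl h)]

theorem tridiag_apply_of_eq_succ {i j : Fin m} (h : (j : ℕ) + 1 = i) : tridiag m a i j = -1 := by
  simp only [tridiag, of_apply]
  rw [if_neg (by omega), if_pos (Or.inr h)]

theorem tridiag_apply_eq_zero {i j : Fin m} (h : (i : ℕ) + 1 < j ∨ (j : ℕ) + 1 < i) :
    tridiag m a i j = 0 := by
  simp only [tridiag, of_apply]
  rw [if_neg (by omega), if_neg (by omega)]

theorem tridiag_submatrix_castSucc :
    (tridiag (m + 1) a).submatrix Fin.castSucc Fin.castSucc = tridiag m a := by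
  ext i j
  simp [tridiag]

theorem det_tridiag_succ_succ :
    (tridiag (m + 2) a).det = a (m + 2) * (tridiag (m + 1) a).det - (tridiag m a).det := by
  have corner : ((tridiag (m + 2) a).submatrix Fin.castSucc (Fin.last m).castSucc.succAbove).det =
      -(tridiag m a).det := by
    have minor : (tridiag (m + 2) a).submatrix (Fin.castSucc ∘ Fin.castSucc)
        ((Fin.last m).castSucc.succAbove ∘ Fin.castSucc) = tridiag m a := by
      ext i j
      simp [tridiag, Fin.succAbove_of_castSucc_lt]
    rw [det_succ_column _ (Fin.last _), Fin.sum_univ_castSucc]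
    simp [minor, tridiag_apply_of_succ_eq, tridiag_apply_eq_zero]
  rw [det_succ_row _ (Fin.last _), Fin.sum_univ_castSucc, Fin.sum_univ_castSucc]
  simp [corner, tridiag_submatrix_castSucc, tridiag_apply_self, tridiag_apply_of_eq_succ,
    tridiag_apply_eq_zero, sub_eq_neg_add]

end Tridiagonal

section Continuant

variable {R : Type*} [CommRing R]

/-- `convNum a (m + 1) / convDen a (m + 1)` is the negative continued fraction
`a 1 - 1 / (a 2 - 1 / (⋯ - 1 / a m))`; the values at `0` continue the recurrence one step back. -/
def convNum (a : ℕ → R) : ℕ → R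
  | 0 => 0
  | m + 1 => (tridiag m a).det

def convDen (a : ℕ → R) : ℕ → R
  | 0 => -1
  | m + 1 => convNum (fun j => a (j + 1)) m

def IsContinuantSeq (c x : ℕ → R) : Prop :=
  ∀ m, x (m + 2) = c (m + 1) * x (m + 1) - x m

theorem isContinuantSeq_convNum (a : ℕ → R) : IsContinuantSeq a (convNum a) := by
  rintro (_ | m)
  · simp [convNum, tridiag]
  · exact det_tridiag_succ_succ a

theorem isContinuantSeq_convDen (a : ℕ → R) : IsContinuantSeq a (convDen a) := by
  rintro (_ | m)
  · simp [convDen, convNum]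
  · exact isContinuantSeq_convNum (fun j => a (j + 1)) m

def wronskian (x y : ℕ → R) (m : ℕ) : R := x m * y (m + 1) - x (m + 1) * y m

variable {c x y : ℕ → R}

theorem IsContinuantSeq.map {S : Type*} [CommRing S] (hx : IsContinuantSeq c x) (f : R →+* S) :
    IsContinuantSeq (fun i => f (c i)) (fun m => f (x m)) := fun m => by
  simp only [hx m, map_sub, map_mul]

theorem IsContinuantSeq.wronskian_eq (hx : IsContinuantSeq c x) (hy : IsContinuantSeq c y)
    (m : ℕ) : wronskian x y m = wronskian x y 0 := by
  induction m with
  | zero => rfl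
  | succ m ih =>
    unfold wronskian at *
    rw [hx, hy]
    linear_combination ih

theorem IsContinuantSeq.wronskian_sub (hx : IsContinuantSeq c x) (hy : IsContinuantSeq c y)
    (m : ℕ) :
    wronskian (fun k => y (k + 1) - y k) (fun k => x (k + 1) - x k) m =
      (c (m + 1) - 2) * wronskian x y m := by
  simp only [wronskian]
  rw [hx, hy]
  ring

end Continuant

theorem IsContinuantSeq.sub_pos_of_two_le {R : Type*} [CommRing R] [LinearOrder R]
    [IsStrictOrderedRing R] {c x : ℕ → R} (hx : IsContinuantSeq c x) (h₀ : 0 < x 1 - x 0)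
    (h₁ : 0 ≤ x 1) {m : ℕ} (hc : ∀ i, 1 ≤ i → i ≤ m → 2 ≤ c i) :
    0 < x (m + 1) - x m ∧ 0 ≤ x (m + 1) := by
  induction m with
  | zero => exact ⟨h₀, h₁⟩
  | succ m ih =>
    obtain ⟨hd, hnn⟩ := ih fun i hi him => hc i hi (by omega)
    have hcm : 0 ≤ c (m + 1) - 2 := by linarith [hc (m + 1) (by omega) le_rfl]
    have step : x (m + 2) - x (m + 1) = (c (m + 1) - 2) * x (m + 1) + (x (m + 1) - x m) := by
      rw [hx]; ring
    constructor <;> nlinarith [mul_nonneg hcm hnn]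

section Slopes

variable {𝕜 : Type*} [Field 𝕜] {c x y : ℕ → 𝕜} {m : ℕ}

def stepSlope (x y : ℕ → 𝕜) (m : ℕ) : 𝕜 := (x (m + 1) - x m) / (y (m + 1) - y m)

theorem IsContinuantSeq.stepSlope_succ_sub (hx : IsContinuantSeq c x) (hy : IsContinuantSeq c y)
    (h₀ : y (m + 1) - y m ≠ 0) (h₁ : y (m + 2) - y (m + 1) ≠ 0) :
    stepSlope x y (m + 1) - stepSlope x y m =
      (c (m + 1) - 2) * wronskian x y m / ((y (m + 1) - y m) * (y (m + 2) - y (m + 1))) := by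
  rw [← hx.wronskian_sub hy, stepSlope, stepSlope, div_sub_div _ _ h₁ h₀, wronskian]
  ring

theorem IsContinuantSeq.stepSlope_succ_eq_iff (hx : IsContinuantSeq c x)
    (hy : IsContinuantSeq c y) (hW : wronskian x y m ≠ 0) (h₀ : y (m + 1) - y m ≠ 0)
    (h₁ : y (m + 2) - y (m + 1) ≠ 0) :
    stepSlope x y (m + 1) = stepSlope x y m ↔ c (m + 1) = 2 := by
  rw [← sub_eq_zero, hx.stepSlope_succ_sub hy h₀ h₁]
  simp [hW, h₀, h₁, sub_eq_zero]

variable [LinearOrder 𝕜] [IsStrictOrderedRing 𝕜]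

theorem IsContinuantSeq.stepSlope_le_succ (hx : IsContinuantSeq c x) (hy : IsContinuantSeq c y)
    (hW : 0 ≤ wronskian x y m) (h₀ : 0 < y (m + 1) - y m) (h₁ : 0 < y (m + 2) - y (m + 1))
    (hc : 2 ≤ c (m + 1)) : stepSlope x y m ≤ stepSlope x y (m + 1) := by
  rw [← sub_nonneg, hx.stepSlope_succ_sub hy h₀.ne' h₁.ne']
  exact div_nonneg (mul_nonneg (sub_nonneg.mpr hc) hW) (mul_pos h₀ h₁).le

theorem stepSlope_lt_div (hy : 0 ≤ y m) (hd : 0 < y (m + 1) - y m) (hW : 0 < wronskian x y m) :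
    stepSlope x y m < x (m + 1) / y (m + 1) := by
  rw [stepSlope, div_lt_div_iff₀ hd (by linarith)]
  unfold wronskian at hW
  linarith

end Slopes

theorem nn_eq_convNum (n : ℕ → ℤ) (p i : ℕ) : nn n p i = convNum n (p - i + 1) := rfl

theorem kk_eq_convDen (n : ℕ → ℤ) {p i : ℕ} (hi : i ≤ p) : kk n p i = convDen n (p - i + 1) := by
  unfold kk
  split_ifs with h
  · simp [h, convDen, convNum]
  · rw [show p - i + 1 = p - i - 1 + 1 + 1 by omega]
    rfl

theorem dd_div_rr_eq_stepSlope (n : ℕ → ℤ) {p i : ℕ} (hi : i < p) :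
    (dd n p i : ℚ) / rr n p i =
      stepSlope (fun m => ((convNum n m : ℤ) : ℚ)) (fun m => ((convDen n m : ℤ) : ℚ)) (p - i) := by
  rw [dd, rr, nn_eq_convNum, nn_eq_convNum, kk_eq_convDen n hi.le, kk_eq_convDen n hi,
    show p - (i + 1) + 1 = p - i by omega, stepSlope]
  push_cast
  rfl

/-- The slopes `s(i) = d(i)/r(i)` for `0 ≤ i ≤ p-1` (with `s(p) := 1`) satisfy
`n(0)/k(0) > s(0) ≥ s(1) ≥ ... ≥ s(p) = 1`, and for `1 ≤ i ≤ p` the equality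
`s(i-1) = s(i)` holds if and only if `n_(p-i+1) = 2`. -/
theorem slopes_monotone
    (p : ℕ) (hp : 1 ≤ p) (n : ℕ → ℤ) (hn : ∀ i, 1 ≤ i → i ≤ p → 2 ≤ n i)
    (s : ℕ → ℚ) (hs : ∀ i ≤ p - 1, s i = (dd n p i : ℚ) / (rr n p i : ℚ))
    (hsp : s p = 1) :
    s 0 < (nn n p 0 : ℚ) / (kk n p 0 : ℚ) ∧
    (∀ i, 1 ≤ i → i ≤ p → s i ≤ s (i - 1)) ∧
    (∀ i, 1 ≤ i → i ≤ p → (s (i - 1) = s i ↔ n (p - i + 1) = 2)) := by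
  set x : ℕ → ℚ := fun m => (convNum n m : ℤ)
  set y : ℕ → ℚ := fun m => (convDen n m : ℤ)
  have hx : IsContinuantSeq (fun i => (n i : ℚ)) x := by
    simpa using (isContinuantSeq_convNum n).map (Int.castRingHom ℚ)
  have hy : IsContinuantSeq (fun i => (n i : ℚ)) y := by
    simpa using (isContinuantSeq_convDen n).map (Int.castRingHom ℚ)
  have hW : ∀ m, wronskian x y m = 1 := fun m => by
    rw [hx.wronskian_eq hy]
    simp [wronskian, x, y, convNum, convDen]
  have hpos : ∀ m ≤ p, 0 < y (m + 1) - y m ∧ 0 ≤ y (m + 1) := fun m hm =>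
    hy.sub_pos_of_two_le (by simp [y, convDen, convNum]) (by simp [y, convDen, convNum])
      fun i hi him => by exact_mod_cast hn i hi (by omega)
  have hslope : ∀ i ≤ p, s i = stepSlope x y (p - i) := by
    intro i hi
    rcases hi.lt_or_eq with hi | rfl
    · rw [hs i (by omega), dd_div_rr_eq_stepSlope n hi]
    · simp [hsp, stepSlope, x, y, convNum, convDen]
  refine ⟨?_, fun i hi hip => ?_, fun i hi hip => ?_⟩
  · have hyp : 0 ≤ y p := by simpa [Nat.sub_add_cancel hp] using (hpos (p - 1) (by omega)).2
    rw [hslope 0 p.zero_le, nn_eq_convNum, kk_eq_convDen n p.zero_le, Nat.sub_zero]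
    exact stepSlope_lt_div hyp (hpos p le_rfl).1 (by simp [hW])
  all_goals
    rw [hslope i hip, hslope (i - 1) (by omega), show p - (i - 1) = p - i + 1 by omega]
  · exact hx.stepSlope_le_succ hy (by simp [hW]) (hpos _ (by omega)).1 (hpos _ (by omega)).1
      (by exact_mod_cast hn _ (by omega) (by omega))
  · exact_mod_cast hx.stepSlope_succ_eq_iff (m := p - i) hy (by simp [hW])
      (hpos _ (by omega)).1.ne' (hpos _ (by omega)).1.ne'
end

section
/- If in addition n_i ≥ 3 for all 1 ≤ i ≤ p, then the slopes are strictly decreasing: s(0) > s(1) > ⋯ > s(p−1) > s(p) = 1, where s(i) := d(i)/r(i) for 0 ≤ i ≤ p−1 and s(p) := 1. -/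
def triA (m : ℕ) (a : ℕ → ℤ) : Matrix (Fin m) (Fin m) ℤ :=
  Matrix.of fun i j : Fin m =>
    if (i : ℕ) = (j : ℕ) then a ((i : ℕ) + 1)
    else if (i : ℕ) + 1 = (j : ℕ) ∨ (j : ℕ) + 1 = (i : ℕ) then -1 else 0

lemma triA_apply (m : ℕ) (a : ℕ → ℤ) (i j : Fin m) :
    triA m a i j = if (i : ℕ) = (j : ℕ) then a ((i : ℕ) + 1)
    else if (i : ℕ) + 1 = (j : ℕ) ∨ (j : ℕ) + 1 = (i : ℕ) then -1 else 0 := rfl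

lemma triA_congr {m m' : ℕ} (a : ℕ → ℤ) (i j : Fin m) (i' j' : Fin m')
    (hi : (i:ℕ) = (i':ℕ)) (hj : (j:ℕ) = (j':ℕ)) : triA m a i j = triA m' a i' j' := by
  rw [triA_apply, triA_apply, hi, hj]

lemma triA_sub (m : ℕ) (a : ℕ → ℤ) :
    (triA (m + 1) a).submatrix Fin.castSucc Fin.castSucc = triA m a := by
  ext i j
  exact triA_congr a _ _ i j (Fin.coe_castSucc i) (Fin.coe_castSucc j)

lemma hcol (m : ℕ) (k : Fin (m+1)) :
    (((Fin.castSucc (Fin.last m)).succAbove k : Fin (m+2)) : ℕ)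
      = if (k:ℕ) < m then (k:ℕ) else (k:ℕ)+1 := by
  rcases lt_or_ge (k:ℕ) m with h | h
  · rw [Fin.succAbove_of_castSucc_lt, if_pos h]
    · rfl
    · simp [Fin.lt_def, h]
  · rw [Fin.succAbove_of_le_castSucc, if_neg (not_lt.mpr h)]
    · rfl
    · simp [Fin.le_def, h]

theorem triDet_rec (m : ℕ) (a : ℕ → ℤ) :
    (triA (m + 2) a).det = a (m + 2) * (triA (m + 1) a).det - (triA m a).det := by
  rw [Matrix.det_succ_row (triA (m+2) a) (Fin.last (m+1)), Fin.succAbove_last]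
  rw [Fin.sum_univ_castSucc, Fin.sum_univ_castSucc]
  have h0 : ∀ j : Fin m, triA (m+2) a (Fin.last (m+1)) (Fin.castSucc (Fin.castSucc j)) = 0 := by
    intro j
    have hj := j.isLt
    rw [triA_apply, if_neg (by simp; omega), if_neg (by simp; omega)]
  rw [Finset.sum_eq_zero (fun j _ => by rw [h0 j]; ring)]
  have hlast : triA (m+2) a (Fin.last (m+1)) (Fin.last (m+1)) = a (m+2) := by
    rw [triA_apply, if_pos rfl]; rfl
  have hsublast : (triA (m+2) a).submatrix Fin.castSucc ((Fin.last (m+1)).succAbove)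
      = triA (m+1) a := by
    rw [Fin.succAbove_last, triA_sub]
  have hmid : triA (m+2) a (Fin.last (m+1)) (Fin.castSucc (Fin.last m)) = -1 := by
    rw [triA_apply, if_neg (by simp), if_pos (by simp)]
  set B := (triA (m+2) a).submatrix Fin.castSucc ((Fin.castSucc (Fin.last m)).succAbove) with hB
  have hclast : (((Fin.castSucc (Fin.last m)).succAbove (Fin.last m) : Fin (m+2)) : ℕ) = m+1 := by
    rw [hcol]; simp
  have hdetB : B.det = -(triA m a).det := by
    rw [Matrix.det_succ_column B (Fin.last m), Fin.sum_univ_castSucc]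
    have hz : ∀ i : Fin m, B (Fin.castSucc i) (Fin.last m) = 0 := by
      intro i
      have hi := i.isLt
      rw [hB, Matrix.submatrix_apply, triA_apply,
        if_neg (by simp [hclast]; omega), if_neg (by simp [hclast]; omega)]
    rw [Finset.sum_eq_zero (fun i _ => by rw [hz i]; ring)]
    have hBll : B (Fin.last m) (Fin.last m) = -1 := by
      rw [hB, Matrix.submatrix_apply, triA_apply,
        if_neg (by simp [hclast]), if_pos (by simp [hclast])]
    have hBsub : B.submatrix ((Fin.last m).succAbove) ((Fin.last m).succAbove) = triA m a := by
      rw [Fin.succAbove_last, hB, Matrix.submatrix_submatrix]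
      ext i j
      have hj := j.isLt
      have hcj : (((Fin.castSucc (Fin.last m)).succAbove (Fin.castSucc j) : Fin (m+2)) : ℕ)
          = (j : ℕ) := by rw [hcol]; simp [hj]
      exact triA_congr a _ _ i j (by simp) hcj
    rw [hBll, hBsub]
    have : ((-1:ℤ)) ^ ((Fin.last m : ℕ) + (Fin.last m : ℕ)) = 1 :=
      Even.neg_one_pow ⟨m, by simp⟩
    rw [this]; ring
  rw [hlast, hsublast, hmid, hdetB]
  have h1 : ((-1:ℤ)) ^ ((Fin.last (m+1) : ℕ) + (Fin.last (m+1) : ℕ)) = 1 :=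
    Even.neg_one_pow ⟨m+1, by simp⟩
  have h2 : ((-1:ℤ)) ^ ((Fin.last (m+1) : ℕ) + (Fin.castSucc (Fin.last m) : ℕ)) = -1 :=
    Odd.neg_one_pow ⟨m, by simp; ring⟩
  rw [h1, h2]
  ring

lemma tridiagDet_eq_triA (m : ℕ) (a : ℕ → ℤ) : tridiagDet m a = (triA m a).det := rfl

lemma triDet_rec' (m : ℕ) (a : ℕ → ℤ) :
    tridiagDet (m + 2) a = a (m + 2) * tridiagDet (m + 1) a - tridiagDet m a := by
  rw [tridiagDet_eq_triA, tridiagDet_eq_triA, tridiagDet_eq_triA, triDet_rec]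


section arith
variable (n : ℕ → ℤ) (p : ℕ)

lemma nn_of_ge {i : ℕ} (h : p ≤ i) : nn n p i = 1 := by
  unfold nn; rw [Nat.sub_eq_zero_of_le h, tridiagDet_zero]

lemma nn_pred (hp : 1 ≤ p) : nn n p (p - 1) = n 1 := by
  unfold nn
  rw [show p - (p - 1) = 1 by omega, tridiagDet_one]

lemma kk_p : kk n p p = 0 := if_pos rfl

lemma kk_of_lt {i : ℕ} (h : i < p) :
    kk n p i = tridiagDet (p - i - 1) (fun j => n (j + 1)) := if_neg (by omega)

lemma kk_pred (hp : 1 ≤ p) : kk n p (p - 1) = 1 := by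
  rw [kk_of_lt n p (by omega), show p - (p-1) - 1 = 0 by omega, tridiagDet_zero]

lemma recN {i : ℕ} (h : i + 2 ≤ p) :
    nn n p i = n (p - i) * nn n p (i + 1) - nn n p (i + 2) := by
  obtain ⟨m, rfl⟩ : ∃ m, p = i + 2 + m := ⟨p - (i + 2), by omega⟩
  unfold nn
  rw [show i + 2 + m - (i+1) = m + 1 by omega, show i + 2 + m - (i+2) = m by omega,
    show i + 2 + m - i = m + 2 by omega, triDet_rec']

lemma recK {i : ℕ} (h : i + 2 ≤ p) :
    kk n p i = n (p - i) * kk n p (i + 1) - kk n p (i + 2) := by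
  rcases eq_or_lt_of_le h with he | hlt
  · subst he
    rw [kk_of_lt n (i+2) (by omega), show i + 2 - i - 1 = 1 by omega, tridiagDet_one,
      show i + 1 = (i + 2) - 1 by omega, kk_pred n (i+2) (by omega), kk_p,
      show i + 2 - i = 2 by omega]
    ring
  · obtain ⟨m, rfl⟩ : ∃ m, p = i + 3 + m := ⟨p - (i + 3), by omega⟩
    rw [kk_of_lt n _ (by omega), kk_of_lt n _ (by omega), kk_of_lt n _ (by omega),
      show i + 3 + m - (i+1) - 1 = m + 1 by omega, show i + 3 + m - (i+2) - 1 = m by omega,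
      show i + 3 + m - i - 1 = m + 2 by omega, triDet_rec',
      show i + 3 + m - i = m + 3 by omega]

lemma keyK : ∀ d i, i < p → p - 1 - i = d →
    nn n p (i+1) * kk n p i - nn n p i * kk n p (i+1) = 1 := by
  intro d
  induction d with
  | zero =>
    intro i hip hd
    have hi : i = p - 1 := by omega
    subst hi
    rw [show p - 1 + 1 = p by omega, nn_of_ge n p le_rfl, kk_pred n p (by omega),
      kk_p]
    ring
  | succ d ih =>
    intro i hip hd
    have h2 : i + 2 ≤ p := by omega
    have hk := ih (i+1) (by omega) (by omega)
    rw [recN n p h2, recK n p h2]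
    linear_combination hk
end arith

lemma kk_pos (n : ℕ → ℤ) (p : ℕ) (hn : ∀ i, 1 ≤ i → i ≤ p → 3 ≤ n i) :
    ∀ d i, i < p → p - 1 - i = d →
    kk n p (i+1) < kk n p i ∧ 0 ≤ kk n p (i+1) := by
  intro d
  induction d with
  | zero =>
    intro i hip hd
    have hi : i = p - 1 := by omega
    subst hi
    rw [show p - 1 + 1 = p by omega, kk_pred n p (by omega), kk_p]
    omega
  | succ d ih =>
    intro i hip hd
    have h2 : i + 2 ≤ p := by omega
    obtain ⟨h1, h0⟩ := ih (i+1) (by omega) (by omega)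
    have hN : 3 ≤ n (p - i) := hn (p - i) (by omega) (by omega)
    rw [recK n p h2]
    constructor
    · nlinarith [mul_le_mul_of_nonneg_right hN (by omega : (0:ℤ) ≤ kk n p (i+1))]
    · omega

/-- If moreover `n_i ≥ 3` for all `1 ≤ i ≤ p`, then the slopes `s(i) = d(i)/r(i)`
(with `s(p) := 1`) are strictly decreasing: `s(0) > s(1) > ... > s(p) = 1`. -/
theorem slopes_strict_decreasing
    (p : ℕ) (hp : 1 ≤ p) (n : ℕ → ℤ) (hn : ∀ i, 1 ≤ i → i ≤ p → 3 ≤ n i)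
    (s : ℕ → ℚ) (hs : ∀ i ≤ p - 1, s i = (dd n p i : ℚ) / (rr n p i : ℚ))
    (hsp : s p = 1) :
    ∀ i < p, s (i + 1) < s i := by
  intro i hip
  rcases eq_or_lt_of_le (Nat.succ_le_of_lt hip) with he | hlt
  · -- i + 1 = p
    have hi : i = p - 1 := by omega
    subst hi
    rw [show p - 1 + 1 = p by omega, hsp, hs (p-1) le_rfl]
    have hd : dd n p (p-1) = n 1 - 1 := by
      rw [dd, nn_pred n p hp, show p - 1 + 1 = p by omega, nn_of_ge n p le_rfl]
    have hr : rr n p (p-1) = 1 := by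
      rw [rr, kk_pred n p hp, show p - 1 + 1 = p by omega, kk_p]
      ring
    rw [hd, hr]
    have h1 : 3 ≤ n 1 := hn 1 le_rfl hp
    push_cast
    rw [div_one]
    have : (3:ℚ) ≤ (n 1 : ℚ) := by exact_mod_cast h1
    linarith
  · -- i + 2 ≤ p
    have h2 : i + 2 ≤ p := hlt
    rw [hs i (by omega), hs (i+1) (by omega)]
    have hk := keyK n p (p - 1 - (i+1)) (i+1) (by omega) rfl
    obtain ⟨hlt1, hge1⟩ := kk_pos n p hn (p - 1 - i) i (by omega) rfl
    obtain ⟨hlt2, hge2⟩ := kk_pos n p hn (p - 1 - (i+1)) (i+1) (by omega) rfl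
    have hN : 3 ≤ n (p - i) := hn (p - i) (by omega) (by omega)
    have hrr1 : 0 < rr n p i := by rw [rr]; omega
    have hrr2 : 0 < rr n p (i+1) := by rw [rr]; omega
    have hcross : dd n p (i+1) * rr n p i < dd n p i * rr n p (i+1) := by
      have key : dd n p i * rr n p (i+1) - dd n p (i+1) * rr n p i = n (p - i) - 2 := by
        rw [dd, dd, rr, rr, recN n p h2, recK n p h2]
        linear_combination (n (p-i) - 2) * hk
      omega
    rw [div_lt_div_iff₀ (by exact_mod_cast hrr2) (by exact_mod_cast hrr1)]
    exact_mod_cast hcross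
end

section
/- Let V be a finite-dimensional normed complex vector space and A : V → V a linear endomorphism. Suppose S ⊆ V \ {0} is a subset that is connected in the norm topology, whose linear span equals all of V, and such that every v ∈ S is an eigenvector of A (i.e., A v ∈ ℂ·v). Then A is a scalar multiple of the identity. -/
/-!
The eigenspaces of `A` are finitely many closed subspaces, and a nonzero vector lies in at most
one of them. So the eigenspaces cut `S` into finitely many relatively closed, pairwise disjoint
pieces; connectedness forces `S` into a single eigenspace `E_c`, and since `S` spans `V`,
`E_c = V`, i.e. `A = c • id`.
-/

open Module End

theorem IsPreconnected.subset_of_mem_of_finite_closed_cover {X ι : Type*} [TopologicalSpace X]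
    {s : Set X} (hs : IsPreconnected s) {I : Set ι} (hI : I.Finite) {F : ι → Set X}
    (hF : ∀ i ∈ I, IsClosed (F i)) (hcover : s ⊆ ⋃ i ∈ I, F i)
    (hdisj : ∀ x ∈ s, ∀ i ∈ I, ∀ j ∈ I, x ∈ F i → x ∈ F j → i = j)
    {x : X} {i : ι} (hxs : x ∈ s) (hi : i ∈ I) (hxi : x ∈ F i) : s ⊆ F i := by
  have hrest : IsClosed (⋃ j ∈ I \ {i}, F j) :=
    hI.sdiff.isClosed_biUnion fun j hj => hF j hj.1
  have hsplit : s ⊆ F i ∪ ⋃ j ∈ I \ {i}, F j := by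
    intro y hy
    obtain ⟨j, hj, hyj⟩ := Set.mem_iUnion₂.mp (hcover hy)
    by_cases hji : j = i
    · exact Or.inl (hji ▸ hyj)
    · exact Or.inr (Set.mem_biUnion ⟨hj, hji⟩ hyj)
  have hnot_rest : ∀ y ∈ s, y ∈ F i → y ∉ ⋃ j ∈ I \ {i}, F j := by
    intro y hy hyi hyrest
    obtain ⟨j, ⟨hj, hji⟩, hyj⟩ := Set.mem_iUnion₂.mp hyrest
    exact hji (hdisj y hy j hj i hi hyj hyi)
  have hsep : s ∩ (F i ∩ ⋃ j ∈ I \ {i}, F j) = ∅ :=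
    Set.eq_empty_iff_forall_notMem.mpr fun y ⟨hy, hyi, hyrest⟩ => hnot_rest y hy hyi hyrest
  exact ((isPreconnected_iff_subset_of_disjoint_closed.mp hs) _ _ (hF i hi) hrest hsplit
    hsep).resolve_right fun h => hnot_rest x hxs hxi (h hxs)

theorem Module.End.eq_of_mem_eigenspace_of_ne_zero {K V : Type*} [Field K] [AddCommGroup V]
    [Module K V] {f : End K V} {μ ν : K} {v : V} (hμ : v ∈ f.eigenspace μ)
    (hν : v ∈ f.eigenspace ν) (hv : v ≠ 0) : μ = ν :=
  smul_left_injective K hv <| (mem_eigenspace_iff.mp hμ).symm.trans (mem_eigenspace_iff.mp hν)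

theorem Module.End.exists_subset_eigenspace_of_isPreconnected {𝕜 V : Type*}
    [NontriviallyNormedField 𝕜] [CompleteSpace 𝕜] [AddCommGroup V] [TopologicalSpace V]
    [IsTopologicalAddGroup V] [Module 𝕜 V] [ContinuousSMul 𝕜 V] [T2Space V]
    [FiniteDimensional 𝕜 V] (f : End 𝕜 V) {S : Set V} (hS : IsPreconnected S)
    (hS0 : ∀ v ∈ S, v ≠ 0) (heig : ∀ v ∈ S, ∃ c : 𝕜, f v = c • v) :
    ∃ c : 𝕜, S ⊆ f.eigenspace c := by
  rcases S.eq_empty_or_nonempty with rfl | ⟨x, hx⟩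
  · exact ⟨0, Set.empty_subset _⟩
  have hvec : ∀ v ∈ S, ∃ c, f.HasEigenvector c v := fun v hv =>
    (heig v hv).imp fun c hc => ⟨mem_eigenspace_iff.mpr hc, hS0 v hv⟩
  obtain ⟨c, hxc⟩ := hvec x hx
  refine ⟨c, hS.subset_of_mem_of_finite_closed_cover f.finite_hasEigenvalue
    (fun μ _ => (f.eigenspace μ).closed_of_finiteDimensional) ?_ ?_ hx
    (hasEigenvalue_of_hasEigenvector hxc) hxc.1⟩
  · intro v hv
    obtain ⟨μ, hμ⟩ := hvec v hv
    exact Set.mem_biUnion (hasEigenvalue_of_hasEigenvector hμ) hμ.1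
  · exact fun v hv μ _ ν _ hμ hν => eq_of_mem_eigenspace_of_ne_zero hμ hν (hS0 v hv)

/-- If a connected (in the norm topology) spanning set of nonzero vectors of a
finite-dimensional normed complex vector space consists of eigenvectors of a
linear endomorphism `A`, then `A` is a scalar multiple of the identity. -/
theorem eq_smul_id_of_connected_spanning_eigenvectors
    (V : Type*) [NormedAddCommGroup V] [NormedSpace ℂ V] [FiniteDimensional ℂ V]
    (A : V →ₗ[ℂ] V) (S : Set V)
    (hS0 : ∀ v ∈ S, v ≠ 0)
    (hconn : IsConnected S)
    (hspan : Submodule.span ℂ S = ⊤)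
    (heig : ∀ v ∈ S, ∃ c : ℂ, A v = c • v) :
    ∃ c : ℂ, A = c • LinearMap.id := by
  obtain ⟨c, hc⟩ :=
    exists_subset_eigenspace_of_isPreconnected A hconn.isPreconnected hS0 heig
  exact ⟨c, LinearMap.ext_on hspan fun v hv => by simpa using mem_eigenspace_iff.mp (hc hv)⟩
end
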